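/- arXiv:2408.14616 — 4 statements merged into one kernel-verified Lean document; each statement's English description precedes it below -/
import Mathlib

section
/- Let Φ : B(α₀, r) ⊆ ℝ^n → ℝ^N be a C²-function on the open ball of radius r > 0 centered at α₀, and suppose there are constants β, γ > 0 such that (1) ⟨DΦ(α₀)ᵀ DΦ(α₀) v, v⟩ ≥ β‖v‖² for all v ∈ ℝ^n, and (2) ‖D²Φ(α)‖ ≤ γ for all α ∈ B(α₀, r). Define r_{β,γ} = min{ r, √β/(6γ) }. Then Φ restricted to the ball B(α₀, r_{β,γ}) is injective. -/
open Metric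
open scoped RealInnerProductSpace

/-! The derivative at `α₀` stretches every vector by at least `√β`, and the bound on `D²Φ` keeps
`DΦ` within `γ ρ ≤ √β / 6` of `DΦ(α₀)` on the ball of radius `ρ`. By the mean value inequality
`Φ y - Φ x` then differs from `DΦ(α₀) (y - x)` by at most `(√β / 6) ‖y - x‖`, so `Φ x = Φ y`
forces `√β ‖y - x‖ ≤ (√β / 6) ‖y - x‖`, i.e. `x = y`. -/

theorem sqrt_mul_norm_le_norm_apply_of_le_inner_adjoint {E F : Type*}
    [NormedAddCommGroup E] [InnerProductSpace ℝ E] [CompleteSpace E]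
    [NormedAddCommGroup F] [InnerProductSpace ℝ F] [CompleteSpace F]
    (A : E →L[ℝ] F) {β : ℝ} (hβ : 0 ≤ β) {v : E}
    (h : β * ‖v‖ ^ 2 ≤ ⟪ContinuousLinearMap.adjoint A (A v), v⟫) :
    Real.sqrt β * ‖v‖ ≤ ‖A v‖ := by
  rw [ContinuousLinearMap.adjoint_inner_left, real_inner_self_eq_norm_sq] at h
  simpa [Real.sqrt_mul hβ, Real.sqrt_sq (norm_nonneg _)] using Real.sqrt_le_sqrt h

section

variable {E F : Type*} [NormedAddCommGroup E] [NormedSpace ℝ E]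
  [NormedAddCommGroup F] [NormedSpace ℝ F] {f : E → F} {s : Set E}

theorem Convex.injOn_of_norm_fderiv_sub_le (hs : Convex ℝ s)
    (hf : ∀ x ∈ s, DifferentiableAt ℝ f x) (A : E →L[ℝ] F) {K c : ℝ}
    (hA : ∀ v, K * ‖v‖ ≤ ‖A v‖) (hfA : ∀ x ∈ s, ‖fderiv ℝ f x - A‖ ≤ c) (hcK : c < K) :
    Set.InjOn f s := by
  intro x hx y hy hxy
  have hmvt := hs.norm_image_sub_le_of_norm_fderiv_le' hf hfA hx hy
  rw [hxy, sub_self, zero_sub, norm_neg] at hmvt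
  have hyx : ‖y - x‖ ≤ 0 := by nlinarith [hA (y - x), norm_nonneg (y - x)]
  exact (sub_eq_zero.mp (norm_le_zero_iff.mp hyx)).symm

theorem Convex.norm_fderiv_sub_le_of_norm_iteratedFDeriv_two_le (hs : Convex ℝ s)
    (hs' : IsOpen s) (hf : ContDiffOn ℝ 2 f s) {γ : ℝ}
    (hγ : ∀ z ∈ s, ‖iteratedFDeriv ℝ 2 f z‖ ≤ γ) {x y : E} (hx : x ∈ s) (hy : y ∈ s) :
    ‖fderiv ℝ f y - fderiv ℝ f x‖ ≤ γ * ‖y - x‖ := by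
  have hdiff : ∀ z ∈ s, DifferentiableAt ℝ (fderiv ℝ f) z := fun z hz =>
    ((hf.fderiv_of_isOpen hs' one_add_one_eq_two.le).differentiableOn one_ne_zero).differentiableAt
      (hs'.mem_nhds hz)
  refine hs.norm_image_sub_le_of_norm_fderiv_le hdiff (fun z hz => ?_) hx hy
  rw [← norm_iteratedFDeriv_one, norm_iteratedFDeriv_fderiv]
  exact hγ z hz

end

/-- Quantitative injectivity (Lemma 3): if `Φ : B(α₀,r) ⊆ ℝ^n → ℝ^N` is `C²`,
`⟨DΦ(α₀)ᵀ DΦ(α₀) v, v⟩ ≥ β ‖v‖²` for all `v`, and `‖D²Φ(α)‖ ≤ γ` on the ball, then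
`Φ` is one-to-one on the ball `B(α₀, min r (√β / (6γ)))`. -/
theorem stmt_3 (n N : ℕ) (α₀ : EuclideanSpace ℝ (Fin n)) (r β γ : ℝ)
    (hr : 0 < r) (hβ : 0 < β) (hγ : 0 < γ)
    (Φ : EuclideanSpace ℝ (Fin n) → EuclideanSpace ℝ (Fin N))
    (hΦ : ContDiffOn ℝ 2 Φ (ball α₀ r))
    (h1 : ∀ v : EuclideanSpace ℝ (Fin n),
      β * ‖v‖ ^ 2 ≤ ⟪(ContinuousLinearMap.adjoint (fderiv ℝ Φ α₀)) ((fderiv ℝ Φ α₀) v), v⟫)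
    (h2 : ∀ α ∈ ball α₀ r, ‖iteratedFDeriv ℝ 2 Φ α‖ ≤ γ) :
    Set.InjOn Φ (ball α₀ (min r (Real.sqrt β / (6 * γ)))) := by
  have hsub : ball α₀ (min r (Real.sqrt β / (6 * γ))) ⊆ ball α₀ r :=
    ball_subset_ball (min_le_left _ _)
  have hsqrtβ : 0 < Real.sqrt β := Real.sqrt_pos.mpr hβ
  have hclose : ∀ z ∈ ball α₀ (min r (Real.sqrt β / (6 * γ))),
      ‖fderiv ℝ Φ z - fderiv ℝ Φ α₀‖ ≤ Real.sqrt β / 6 := by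
    intro z hz
    have hzρ : ‖z - α₀‖ ≤ Real.sqrt β / (6 * γ) :=
      (mem_ball_iff_norm.mp hz).le.trans (min_le_right _ _)
    calc ‖fderiv ℝ Φ z - fderiv ℝ Φ α₀‖ ≤ γ * ‖z - α₀‖ :=
          (convex_ball α₀ r).norm_fderiv_sub_le_of_norm_iteratedFDeriv_two_le isOpen_ball hΦ h2
            (mem_ball_self hr) (hsub hz)
      _ ≤ γ * (Real.sqrt β / (6 * γ)) := mul_le_mul_of_nonneg_left hzρ hγ.le
      _ = Real.sqrt β / 6 := by field_simp
  refine (convex_ball α₀ _).injOn_of_norm_fderiv_sub_le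
    (fun z hz => (hΦ.differentiableOn two_ne_zero).differentiableAt
      (isOpen_ball.mem_nhds (hsub hz)))
    (fderiv ℝ Φ α₀)
    (fun v => sqrt_mul_norm_le_norm_apply_of_le_inner_adjoint _ hβ.le (h1 v)) hclose ?_
  linarith
end

section
/- Fix h > 0 and n ≥ 1, and consider the set A = { α₀ ∈ M_n(ℝ) : the matrix exponential exp(h·α₀) has n pairwise distinct complex eigenvalues }. Then A is an open subset of the space of n×n real matrices, and its complement A^c has Lebesgue measure zero in M_n(ℝ) identified with ℝ^{n²}. -/
/-!
`exp(h·α)` has `n` distinct eigenvalues iff the resultant of its characteristic polynomial `p`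
and `p'` does not vanish. That resultant is a fixed integer polynomial in the entries of
`exp(h·α)`, hence a real-analytic function `F` of `α`. So the set in question is `{F ≠ 0}`,
which is open, and `F` is not identically zero because `exp(h·diag(0, 1, …, n-1))` has the
distinct eigenvalues `e^{hk}`. The zero set of a real-analytic function that is not identically
zero is Lebesgue-null: in one variable it is countable by the identity theorem, and the general
case follows by induction on the dimension through Fubini's theorem.
-/

open MeasureTheory Set Polynomial

section AnalyticZeroSet

variable {F : Type*} [NormedAddCommGroup F] [NormedSpace ℝ F]

theorem AnalyticOnNhd.countable_setOf_eq_zero {f : ℝ → F} (hf : AnalyticOnNhd ℝ f univ) {a : ℝ}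
    (ha : f a ≠ 0) : {x | f x = 0}.Countable := by
  rcases hf.eqOn_zero_or_eventually_ne_zero_of_preconnected isPreconnected_univ with h | h
  · exact absurd (h (mem_univ a)) ha
  · simpa using (HereditarilyLindelofSpace.isLindelof _).countable_of_isDiscrete
      (isDiscrete_of_codiscreteWithin (s := {x | f x = 0}) h)

theorem ContinuousLinearEquiv.addHaar_preimage_eq_zero {E E' : Type*}
    [NormedAddCommGroup E] [NormedSpace ℝ E] [FiniteDimensional ℝ E] [MeasurableSpace E]
    [BorelSpace E] [NormedAddCommGroup E'] [NormedSpace ℝ E'] [FiniteDimensional ℝ E']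
    [MeasurableSpace E'] [BorelSpace E'] (e : E ≃L[ℝ] E') (μ : Measure E) [μ.IsAddHaarMeasure]
    (ν : Measure E') [ν.IsAddHaarMeasure] {s : Set E'} (hs : ν s = 0) : μ (e ⁻¹' s) = 0 := by
  let e' := e.toHomeomorph.toMeasurableEquiv
  have : (μ.map e').IsAddHaarMeasure := e.isAddHaarMeasure_map μ
  rw [show ⇑e = e' from rfl, ← e'.map_apply]
  exact Measure.absolutelyContinuous_isAddHaarMeasure _ ν hs

theorem AnalyticOnNhd.volume_prod_setOf_eq_zero {E : Type*} [NormedAddCommGroup E]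
    [NormedSpace ℝ E] [MeasurableSpace E] [BorelSpace E] (ν : Measure E) [SFinite ν]
    (ih : ∀ g : E → F, AnalyticOnNhd ℝ g univ → (∃ b, g b ≠ 0) → ν {y | g y = 0} = 0)
    {f : ℝ × E → F} (hf : AnalyticOnNhd ℝ f univ) {a : ℝ × E} (ha : f a ≠ 0) :
    (volume.prod ν) {x | f x = 0} = 0 := by
  have hmeas : MeasurableSet {x | f x = 0} :=
    (isClosed_eq hf.continuous continuous_const).measurableSet
  have hline : AnalyticOnNhd ℝ (fun t => f (t, a.2)) univ := fun t _ =>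
    (hf _ (mem_univ _)).comp (analyticAt_id.prod analyticAt_const)
  have hbad : volume {t | f (t, a.2) = 0} = 0 :=
    (hline.countable_setOf_eq_zero (a := a.1) ha).measure_zero _
  rw [Measure.measure_prod_null hmeas]
  filter_upwards [measure_eq_zero_iff_ae_notMem.mp hbad] with t ht
  exact ih _ (fun y _ => (hf _ (mem_univ _)).comp (analyticAt_const.prod analyticAt_id)) ⟨a.2, ht⟩

theorem AnalyticOnNhd.volume_pi_setOf_eq_zero (d : ℕ) {f : (Fin d → ℝ) → F}
    (hf : AnalyticOnNhd ℝ f univ) {a : Fin d → ℝ} (ha : f a ≠ 0) : volume {x | f x = 0} = 0 := by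
  induction d with
  | zero =>
    convert measure_empty (μ := (volume : Measure (Fin 0 → ℝ)))
    exact eq_empty_of_forall_notMem fun x hx => ha (Subsingleton.elim x a ▸ hx)
  | succ d ih =>
    let e : (Fin (d + 1) → ℝ) ≃L[ℝ] ℝ × (Fin d → ℝ) :=
      ContinuousLinearEquiv.ofFinrankEq (by simp [add_comm])
    have : (volume : Measure (ℝ × (Fin d → ℝ))).IsAddHaarMeasure :=
      Measure.prod.instIsAddHaarMeasure _ _
    have key := (hf.comp (e.symm.analyticOnNhd univ) (mapsTo_univ _ _)).volume_prod_setOf_eq_zero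
      volume (fun g hg ⟨b, hb⟩ => ih hg hb) (a := e a) (by simpa using ha)
    simpa [Set.preimage, Function.comp_def] using e.addHaar_preimage_eq_zero volume volume key

theorem AnalyticOnNhd.addHaar_setOf_eq_zero {E : Type*} [NormedAddCommGroup E]
    [NormedSpace ℝ E] [FiniteDimensional ℝ E] [MeasurableSpace E] [BorelSpace E]
    (μ : Measure E) [μ.IsAddHaarMeasure] {f : E → F} (hf : AnalyticOnNhd ℝ f univ) {a : E}
    (ha : f a ≠ 0) : μ {x | f x = 0} = 0 := by
  let e : E ≃L[ℝ] (Fin (Module.finrank ℝ E) → ℝ) := ContinuousLinearEquiv.ofFinrankEq (by simp)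
  have key := volume_pi_setOf_eq_zero _ (hf.comp (e.symm.analyticOnNhd univ) (mapsTo_univ _ _))
    (a := e a) (by simpa using ha)
  simpa [Set.preimage, Function.comp_def] using e.addHaar_preimage_eq_zero μ volume key

end AnalyticZeroSet

theorem Polynomial.card_roots_toFinset_eq_natDegree_iff_resultant_ne_zero {K : Type*} [Field K]
    [IsAlgClosed K] [DecidableEq K] {p : K[X]} (hp : p ≠ 0) :
    p.roots.toFinset.card = p.natDegree ↔ p.resultant (derivative p) ≠ 0 := by
  have hsplit := IsAlgClosed.splits p
  conv_lhs => rw [← splits_iff_card_roots.mp hsplit]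
  rw [Multiset.toFinset_card_eq_card_iff_nodup, nodup_roots_iff_of_splits hp hsplit,
    separable_def, Ne, resultant_eq_zero_iff]
  simp [hp]

open MvPolynomial in
theorem Matrix.resultant_charpoly_derivative_eq_aeval {R ι : Type*} [CommRing R] [Nontrivial R]
    [IsAddTorsionFree R] [Fintype ι] [DecidableEq ι] (N : Matrix ι ι R) :
    N.charpoly.resultant (derivative N.charpoly) =
      aeval (fun p : ι × ι => N p.1 p.2) ((charpoly.univ ℤ ι).resultant
        (derivative (charpoly.univ ℤ ι)) (Fintype.card ι) (Fintype.card ι - 1)) := by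
  rw [MvPolynomial.aeval_eq_eval₂Hom, ← resultant_map_map, ← derivative_map, algebraMap_int_eq,
    charpoly.univ_map_eval₂Hom, natDegree_derivative, charpoly_natDegree_eq_dim]
  rfl

theorem AnalyticOnNhd.resultant_charpoly_derivative {𝕜 E B ι : Type*} [NontriviallyNormedField 𝕜]
    [NormedAddCommGroup E] [NormedSpace 𝕜 E] [NormedField B] [NormedAlgebra 𝕜 B] [CharZero B]
    [Fintype ι] [DecidableEq ι] {M : E → Matrix ι ι B} {s : Set E}
    (hM : ∀ i j, AnalyticOnNhd 𝕜 (fun x => M x i j) s) :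
    AnalyticOnNhd 𝕜 (fun x => (M x).charpoly.resultant (derivative (M x).charpoly)) s := by
  have := AnalyticOnNhd.aeval_mvPolynomial (A := ℤ) (f := fun x (p : ι × ι) => M x p.1 p.2)
    (fun p => hM p.1 p.2) ((Matrix.charpoly.univ ℤ ι).resultant
      (derivative (Matrix.charpoly.univ ℤ ι)) (Fintype.card ι) (Fintype.card ι - 1))
  simpa only [Matrix.resultant_charpoly_derivative_eq_aeval] using this

section MatrixExp

attribute [local instance] Matrix.linftyOpNormedAddCommGroup Matrix.linftyOpNormedRing
  Matrix.linftyOpNormedAlgebra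

theorem Matrix.analyticOnNhd_exp_smul_of_apply {ι : Type*} [Fintype ι] [DecidableEq ι] (h : ℝ)
    (i j : ι) :
    AnalyticOnNhd ℝ (fun α : ι → ι → ℝ => NormedSpace.exp (h • Matrix.of α) i j) univ := by
  let smulOf : (ι → ι → ℝ) →L[ℝ] Matrix ι ι ℝ :=
    LinearMap.toContinuousLinearMap (h • (Matrix.ofLinearEquiv ℝ).toLinearMap)
  let entry : Matrix ι ι ℝ →L[ℝ] ℝ :=
    LinearMap.toContinuousLinearMap (Matrix.entryLinearMap ℝ ℝ i j)
  intro α _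
  exact (entry.analyticAt _).comp ((NormedSpace.exp_analytic _).comp (smulOf.analyticAt α))

end MatrixExp

theorem Matrix.card_roots_charpoly_map_exp_smul_diagonal {ι : Type*} [Fintype ι] [DecidableEq ι]
    {h : ℝ} (hh : h ≠ 0) {v : ι → ℝ} (hv : Function.Injective v) :
    ((NormedSpace.exp (h • Matrix.diagonal v)).map Complex.ofReal).charpoly.roots.toFinset.card
      = Fintype.card ι := by
  set d : ι → ℂ := fun i => (NormedSpace.exp (h • v) i : ℝ)
  have hd : Function.Injective d := fun i j hij => hv <| mul_left_cancel₀ hh <|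
    Real.exp_injective <| by
      simpa [d, Pi.exp_def, Real.exp_eq_exp_ℝ] using Complex.ofReal_injective hij
  have hprod : ∏ i, (X - C (d i)) = ((Finset.univ.val.map d).map fun a => X - C a).prod := by
    rw [Multiset.map_map]; rfl
  rw [← Matrix.diagonal_smul, Matrix.exp_diagonal, Matrix.diagonal_map Complex.ofReal_zero,
    Matrix.charpoly_diagonal, hprod, roots_multiset_prod_X_sub_C,
    Multiset.toFinset_card_of_nodup (Finset.univ.nodup.map hd), Multiset.card_map]
  rfl

theorem stmt_8_general (h : ℝ) (hh : 0 < h) (n : ℕ) :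
    IsOpen {α₀ : Fin n → Fin n → ℝ |
      (((NormedSpace.exp (h • Matrix.of α₀)).map Complex.ofReal).charpoly.roots.toFinset.card
        = n)} ∧
    volume {α₀ : Fin n → Fin n → ℝ |
      (((NormedSpace.exp (h • Matrix.of α₀)).map Complex.ofReal).charpoly.roots.toFinset.card
        = n)}ᶜ = 0 := by
  let M (α : Fin n → Fin n → ℝ) := (NormedSpace.exp (h • Matrix.of α)).map Complex.ofReal
  have hF : AnalyticOnNhd ℝ (fun α => (M α).charpoly.resultant (derivative (M α).charpoly)) univ :=
    .resultant_charpoly_derivative fun i j => (Complex.ofRealCLM.analyticOnNhd univ).comp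
      (Matrix.analyticOnNhd_exp_smul_of_apply h i j) (mapsTo_univ _ _)
  have hdistinct (α) : (M α).charpoly.roots.toFinset.card = n ↔
      (M α).charpoly.resultant (derivative (M α).charpoly) ≠ 0 := by
    simpa [Matrix.charpoly_natDegree_eq_dim] using
      card_roots_toFinset_eq_natDegree_iff_resultant_ne_zero (M α).charpoly_monic.ne_zero
  simp only [M] at hdistinct hF
  simp only [hdistinct, compl_ofPred, not_not]
  refine ⟨isOpen_ne_fun hF.continuous continuous_const,
    hF.addHaar_setOf_eq_zero volume (a := Matrix.diagonal (↑)) ((hdistinct _).mp ?_)⟩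
  have hdiag := Matrix.card_roots_charpoly_map_exp_smul_diagonal hh.ne'
    (v := fun i : Fin n => (i : ℝ)) (Nat.cast_injective.comp Fin.val_injective)
  rwa [Fintype.card_fin] at hdiag

/-- Fix `h > 0` and `n ≥ 1`. The set `A` of real `n×n` matrices `α₀` such that the
matrix exponential `exp(h·α₀)` has `n` pairwise distinct complex eigenvalues (its
characteristic polynomial over `ℂ` has `n` distinct roots) is open, and its
complement has Lebesgue measure zero in `M_n(ℝ) ≅ ℝ^{n²}`. -/
theorem stmt_8 (h : ℝ) (hh : 0 < h) (n : ℕ) (hn : 1 ≤ n) :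
    IsOpen {α₀ : Fin n → Fin n → ℝ |
      (((NormedSpace.exp (h • Matrix.of α₀)).map Complex.ofReal).charpoly.roots.toFinset.card
        = n)} ∧
    volume {α₀ : Fin n → Fin n → ℝ |
      (((NormedSpace.exp (h • Matrix.of α₀)).map Complex.ofReal).charpoly.roots.toFinset.card
        = n)}ᶜ = 0 :=
  stmt_8_general h hh n
end

section
/- Fix h > 0 and let α₀ be an n×n real matrix such that exp(h·α₀) has n pairwise distinct complex eigenvalues. Then the solution set S = { α ∈ M_n(ℝ) : exp(h·α) = exp(h·α₀) } is at most countable, and every point of S is isolated in S (i.e. S is a discrete subset of M_n(ℝ)). -/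
/-!
Complexify and put `A = exp (h • α₀)` in diagonal form `diag μ` by a change of basis `Ψ`; its
eigenvalues `μ i` are pairwise distinct. A solution `α` commutes with `A = exp (h • α)`, and a
matrix commuting with a diagonal matrix with distinct entries is itself diagonal, so
`Ψ (h • α) = diag d` with `exp (d i) = μ i`. Since `Ψ` is injective, `α ↦ d` embeds the solution
set continuously into the set of choices of logarithms of the `μ i`, a countable set whose points
are `2π`-separated.
-/

open Set Filter Matrix NormedSpace

theorem IsDiscrete.of_mapsTo {X Y : Type*} [TopologicalSpace X] [TopologicalSpace Y]
    {f : X → Y} {s : Set X} {t : Set Y} (ht : IsDiscrete t) (hf : ContinuousOn f s)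
    (hmaps : MapsTo f s t) (hinj : InjOn f s) : IsDiscrete s := by
  have h := ht.preimage hf.domRestrict.continuousOn hinj.injective
  rw [show s.domRestrict f ⁻¹' t = Set.univ from eq_univ_of_forall fun x => hmaps x.2,
    isDiscrete_univ_iff] at h
  exact ⟨h⟩

namespace Complex

theorem eq_of_exp_eq_of_dist_lt {a b : ℂ} (h : exp a = exp b) (hd : dist a b < 2 * Real.pi) :
    a = b := by
  obtain ⟨k, rfl⟩ := exp_eq_exp_iff_exists_int.1 h
  have hk : k = 0 := by
    contrapose! hd
    have h1 : (1 : ℝ) ≤ |(k : ℝ)| := by exact_mod_cast Int.one_le_abs hd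
    have h2 : dist (b + k * (2 * Real.pi * I)) b = |(k : ℝ)| * (2 * Real.pi) := by
      simp [abs_of_pos Real.pi_pos]
    nlinarith [Real.pi_pos]
  simp [hk]

variable {ι : Type*} [Fintype ι]

theorem countable_setOf_forall_exp_eq (μ : ι → ℂ) :
    {d : ι → ℂ | ∀ i, exp (d i) = μ i}.Countable :=
  countable_pi fun i => (countable_singleton (μ i)).preimage_cexp

theorem isDiscrete_setOf_forall_exp_eq (μ : ι → ℂ) :
    IsDiscrete {d : ι → ℂ | ∀ i, exp (d i) = μ i} := by
  refine .of_nhdsWithin fun d hd => le_pure_iff.2 <| mem_nhdsWithin_iff_exists_mem_nhds_inter.2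
    ⟨Metric.ball d (2 * Real.pi), Metric.ball_mem_nhds d Real.two_pi_pos, ?_⟩
  rintro e ⟨he, he'⟩
  funext i
  exact eq_of_exp_eq_of_dist_lt ((he' i).trans (hd i).symm)
    ((dist_le_pi_dist e d i).trans_lt he)

end Complex

namespace Matrix

variable {m ι : Type*} [Fintype m] [DecidableEq m] [Fintype ι] [DecidableEq ι]

theorem isDiag_of_commute_diagonal {R : Type*} [CommRing R] [NoZeroDivisors R] {μ : ι → R}
    (hμ : Function.Injective μ) {M : Matrix ι ι R} (h : Commute (diagonal μ) M) : M.IsDiag := by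
  intro i j hij
  have hij' := congrFun (congrFun h.eq i) j
  simp only [diagonal_mul, mul_diagonal] at hij'
  have : (μ i - μ j) * M i j = 0 := by linear_combination hij'
  exact (mul_eq_zero.1 this).resolve_left (sub_ne_zero.2 (hμ.ne hij))

theorem exp_map_ofReal (M : Matrix m m ℝ) :
    exp (M.map Complex.ofReal) = (exp M).map Complex.ofReal := by
  open scoped Norms.Operator in
  exact (NormedSpace.map_exp Complex.ofRealHom.mapMatrix
    (continuous_id.matrix_map Complex.continuous_ofReal) M).symm

theorem exists_algEquiv_apply_eq_diagonal_roots {K : Type*} [Field K] [DecidableEq K]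
    (A : Matrix m m K) (h : A.charpoly.roots.toFinset.card = Fintype.card m) :
    ∃ Ψ : Matrix m m K ≃ₐ[K] Matrix A.charpoly.roots.toFinset A.charpoly.roots.toFinset K,
      Ψ A = diagonal (↑) := by
  set s := A.charpoly.roots.toFinset
  have hev : ∀ μ : s, Module.End.HasEigenvalue (toLin' A) μ := fun μ => by
    rw [Module.End.hasEigenvalue_iff_isRoot_charpoly, charpoly_toLin']
    exact (Polynomial.mem_roots'.1 (Multiset.mem_toFinset.1 μ.2)).2
  choose v hv using fun μ : s => (hev μ).exists_hasEigenvector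
  have hli := Module.End.eigenvectors_linearIndependent' _ _ Subtype.val_injective v hv
  let b := basisOfLinearIndependentOfCardEqFinrank' v hli (by simpa using h)
  refine ⟨toLinAlgEquiv'.trans (LinearMap.toMatrixAlgEquiv b), ?_⟩
  ext μ ν
  have hAv : A *ᵥ b ν = (ν : K) • b ν := by
    simpa [b] using (hv ν).apply_eq_smul
  simp only [AlgEquiv.trans_apply, toLinAlgEquiv'_apply, LinearMap.toMatrixAlgEquiv_apply,
    hAv, map_smul, Module.Basis.repr_self]
  rcases eq_or_ne μ ν with rfl | hne <;> simp [*]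

theorem isDiag_and_exp_diag_of_exp_eq (Ψ : Matrix m m ℂ ≃ₐ[ℂ] Matrix ι ι ℂ) {μ : ι → ℂ}
    (hμ : Function.Injective μ) {A X : Matrix m m ℂ} (hA : Ψ A = diagonal μ) (hX : exp X = A) :
    (Ψ X).IsDiag ∧ ∀ i, Complex.exp ((Ψ X).diag i) = μ i := by
  have hΨexp : Ψ (exp X) = exp (Ψ X) := by
    open scoped Norms.Operator in
    exact NormedSpace.map_exp Ψ (LinearMap.continuous_of_finiteDimensional Ψ.toLinearMap) X
  have hdiag : (Ψ X).IsDiag := isDiag_of_commute_diagonal hμ <| by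
    rw [← hA, ← hX]; exact ((Commute.refl X).exp_left).map Ψ
  refine ⟨hdiag, fun i => ?_⟩
  have : diagonal μ = diagonal (exp (Ψ X).diag) := by
    rw [← hA, ← hX, hΨexp, ← exp_diagonal, hdiag.diagonal_diag]
  rw [Complex.exp_eq_exp_ℂ, diagonal_injective this, Pi.coe_exp]

end Matrix

/-- Fix `h > 0` and let `α₀` be a real `n×n` matrix such that `exp(h·α₀)` has `n`
pairwise distinct complex eigenvalues. Then the solution set
`S = {α : exp(h·α) = exp(h·α₀)}` is at most countable and each of its points is
isolated in `S`. -/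
theorem stmt_9 (h : ℝ) (hh : 0 < h) (n : ℕ) (α₀ : Matrix (Fin n) (Fin n) ℝ)
    (hdist : ((NormedSpace.exp (h • α₀)).map Complex.ofReal).charpoly.roots.toFinset.card = n) :
    Set.Countable {α : Matrix (Fin n) (Fin n) ℝ |
        NormedSpace.exp (h • α) = NormedSpace.exp (h • α₀)} ∧
    ∀ α ∈ {α : Matrix (Fin n) (Fin n) ℝ |
        NormedSpace.exp (h • α) = NormedSpace.exp (h • α₀)},
      ∃ U ∈ nhds α, U ∩ {α : Matrix (Fin n) (Fin n) ℝ |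
        NormedSpace.exp (h • α) = NormedSpace.exp (h • α₀)} = {α} := by
  set S := {α : Matrix (Fin n) (Fin n) ℝ | exp (h • α) = exp (h • α₀)}
  obtain ⟨Ψ, hΨ⟩ :=
    exists_algEquiv_apply_eq_diagonal_roots _ (hdist.trans (Fintype.card_fin n).symm)
  let X (α : Matrix (Fin n) (Fin n) ℝ) : Matrix (Fin n) (Fin n) ℂ := (h • α).map Complex.ofReal
  let Φ (α : Matrix (Fin n) (Fin n) ℝ) := (Ψ (X α)).diag
  have hlog : ∀ α ∈ S, (Ψ (X α)).IsDiag ∧ ∀ i, Complex.exp (Φ α i) = i := fun α hα =>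
    isDiag_and_exp_diag_of_exp_eq Ψ Subtype.val_injective hΨ (by rw [exp_map_ofReal, hα])
  have hmaps : MapsTo Φ S {d | ∀ i, Complex.exp (d i) = i} := fun α hα => (hlog α hα).2
  have hinj : InjOn Φ S := fun α hα β hβ hαβ => by
    have hX : X α = X β := Ψ.injective <| by
      rw [← (hlog α hα).1.diagonal_diag, ← (hlog β hβ).1.diagonal_diag]
      exact congrArg diagonal hαβ
    exact smul_right_injective _ hh.ne' (map_injective Complex.ofReal_injective hX)
  have hcont : Continuous Φ :=
    ((LinearMap.continuous_of_finiteDimensional Ψ.toLinearMap).comp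
      ((continuous_const_smul h).matrix_map Complex.continuous_ofReal)).matrix_diag
  have hS : IsDiscrete S :=
    (Complex.isDiscrete_setOf_forall_exp_eq _).of_mapsTo hcont.continuousOn hmaps hinj
  exact ⟨hmaps.countable_of_injOn hinj (Complex.countable_setOf_forall_exp_eq _),
    fun α hα => nhds_inter_eq_singleton_of_mem_discrete hS hα⟩
end

section
/- Let C and D be n×n real matrices and x ∈ ℝ^n such that the vectors x, Cx, C²x, …, C^{n−1}x are linearly independent and C^k x = D^k x for all k = 1, 2, …, n. Then C = D. -/
open Submodule Set

namespace Matrix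

variable {R n : Type*} [CommRing R] [Fintype n] [DecidableEq n]

theorem ext_of_mulVec_eq_on_spanning {ι : Type*} {A B : Matrix n n R} {v : ι → n → R}
    (hv : span R (range v) = ⊤) (h : ∀ i, A *ᵥ v i = B *ᵥ v i) : A = B :=
  toLin'.injective (LinearMap.ext_on_range hv h)

theorem eq_of_krylov_span_eq_top (m : ℕ) {C D : Matrix n n R} {x : n → R}
    (hspan : span R (range fun i : Fin m => C ^ (i : ℕ) *ᵥ x) = ⊤)
    (heq : ∀ k : ℕ, 1 ≤ k → k ≤ m → C ^ k *ᵥ x = D ^ k *ᵥ x) : C = D := by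
  refine ext_of_mulVec_eq_on_spanning hspan fun i => ?_
  have hi : C ^ (i : ℕ) *ᵥ x = D ^ (i : ℕ) *ᵥ x := by
    rcases Nat.eq_zero_or_pos i with h | h
    · simp [h]
    · exact heq i h i.isLt.le
  calc C *ᵥ (C ^ (i : ℕ) *ᵥ x) = C ^ ((i : ℕ) + 1) *ᵥ x := by rw [mulVec_mulVec, pow_succ']
    _ = D ^ ((i : ℕ) + 1) *ᵥ x := heq _ (Nat.le_add_left 1 i) i.isLt
    _ = D *ᵥ (C ^ (i : ℕ) *ᵥ x) := by rw [hi, mulVec_mulVec, pow_succ']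

end Matrix

/-- If `x, Cx, …, C^{n−1}x` are linearly independent and `C^k x = D^k x` for
`k = 1, …, n`, then `C = D`. -/
theorem stmt_12 (n : ℕ) (C D : Matrix (Fin n) (Fin n) ℝ) (x : Fin n → ℝ)
    (hindep : LinearIndependent ℝ fun i : Fin n => (C ^ (i : ℕ)).mulVec x)
    (heq : ∀ k : ℕ, 1 ≤ k → k ≤ n → (C ^ k).mulVec x = (D ^ k).mulVec x) :
    C = D :=
  Matrix.eq_of_krylov_span_eq_top n (hindep.span_eq_top_of_card_eq_finrank' (by simp)) heq
end
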